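/- Let θ ∈ T^n = (ℝ/ℤ)^n and suppose that the closed subgroup Γ = Γ(θ), the closure of the set of positive integer multiples of θ, is connected. Then for every x ∈ Γ, every neighborhood U of x in T^n, every integer m ≥ 1 and every residue a ∈ ℕ, there exist infinitely many k ∈ ℕ with k ≡ a (mod m) and kθ ∈ U. In other words, the multiples of θ along any arithmetic progression are dense in Γ. -/

import Mathlib

/-!
Let `H` and `K` be the closures of the cyclic groups generated by `θ` and by `m • θ`. In a compact
group every point of `H` is a cluster point of the sequence `j • θ`, so `Γ(θ) = H`. The `m` cosets
`a • θ + K`, `a < m`, cover `H`, so `K` is a closed subgroup of finite index of `H`, hence open in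
`H`, and connectedness forces `K = H`. Then `x - a • θ ∈ K` is a cluster point of the multiples
`j • (m • θ)`, i.e. `x` is one of the `(a + m j) • θ`.
-/

noncomputable section

/-- The `n`-dimensional torus `(ℝ/ℤ)^n`. -/
abbrev Torus (n : ℕ) := Fin n → AddCircle (1 : ℝ)

/-- `Γ(θ)`: the closure in `T^n` of the set of positive integer multiples of `θ`. -/
def GammaCl (n : ℕ) (θ : Torus n) : Set (Torus n) :=
  closure {x : Torus n | ∃ k : ℕ, 1 ≤ k ∧ x = k • θ}

open Filter Topology
open AddSubgroup (zmultiples mem_zmultiples le_topologicalClosure nsmul_mem)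

theorem AddSubgroup.le_of_isConnected_of_isClosed_of_finiteIndex {G : Type*} [AddGroup G]
    [TopologicalSpace G] [IsTopologicalAddGroup G] {H K : AddSubgroup G}
    (hH : IsConnected (H : Set G)) (hK : IsClosed (K : Set G)) [(K.addSubgroupOf H).FiniteIndex] :
    H ≤ K := by
  have : ConnectedSpace H := isConnected_iff_connectedSpace.mp hH
  have hclosed : IsClosed (K.addSubgroupOf H : Set H) := hK.preimage continuous_subtype_val
  have hclopen : IsClopen (K.addSubgroupOf H : Set H) :=
    ⟨hclosed, (K.addSubgroupOf H).isOpen_of_isClosed_of_finiteIndex hclosed⟩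
  rw [← AddSubgroup.addSubgroupOf_eq_top, ← SetLike.coe_set_eq, AddSubgroup.coe_top]
  exact (isClopen_iff.mp hclopen).resolve_left (Set.nonempty_iff_ne_empty.mp ⟨0, zero_mem _⟩)

section CompactGroup

variable {G : Type*} [AddCommGroup G] [TopologicalSpace G] [CompactSpace G]
  [IsTopologicalAddGroup G]

theorem closure_setOf_pos_nsmul_eq (θ : G) :
    closure {x : G | ∃ k : ℕ, 1 ≤ k ∧ x = k • θ} = (zmultiples θ).topologicalClosure := by
  refine subset_antisymm (closure_mono ?_) fun x hx ↦ ?_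
  · rintro _ ⟨k, -, rfl⟩
    exact nsmul_mem (mem_zmultiples θ) k
  · rw [SetLike.mem_coe, ← mapClusterPt_atTop_nsmul_iff_mem_topologicalClosure_zmultiples] at hx
    refine mem_closure_iff_clusterPt.mpr (ClusterPt.mono hx ?_)
    exact tendsto_principal.mpr ((eventually_ge_atTop 1).mono fun k hk ↦ ⟨k, hk, rfl⟩)

theorem exists_lt_sub_nsmul_mem_topologicalClosure_zmultiples_nsmul (θ : G) {m : ℕ} (hm : m ≠ 0)
    {x : G} (hx : x ∈ (zmultiples θ).topologicalClosure) :
    ∃ a < m, x - a • θ ∈ (zmultiples (m • θ)).topologicalClosure := by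
  set K := (zmultiples (m • θ)).topologicalClosure
  have hclosed : IsClosed (⋃ a ∈ Set.Iio m, (· - a • θ) ⁻¹' (K : Set G)) :=
    (Set.finite_Iio m).isClosed_biUnion fun a _ ↦
      (zmultiples (m • θ)).isClosed_topologicalClosure.preimage (continuous_sub_right _)
  rw [← SetLike.mem_coe, ← closure_setOf_pos_nsmul_eq] at hx
  suffices hcover : {x : G | ∃ k : ℕ, 1 ≤ k ∧ x = k • θ} ⊆
      ⋃ a ∈ Set.Iio m, (· - a • θ) ⁻¹' (K : Set G) by
    simpa using closure_minimal hcover hclosed hx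
  rintro _ ⟨k, -, rfl⟩
  have hk : k • θ - (k % m) • θ = (k / m) • (m • θ) := by
    rw [sub_eq_iff_eq_add', smul_smul, ← add_nsmul, Nat.mod_add_div']
  refine Set.mem_iUnion₂.mpr ⟨k % m, Nat.mod_lt k (Nat.pos_of_ne_zero hm), ?_⟩
  rw [Set.mem_preimage, hk]
  exact le_topologicalClosure _ (nsmul_mem (mem_zmultiples _) _)

theorem finiteIndex_topologicalClosure_zmultiples_nsmul (θ : G) {m : ℕ} (hm : m ≠ 0) :
    ((zmultiples (m • θ)).topologicalClosure.addSubgroupOf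
      (zmultiples θ).topologicalClosure).FiniteIndex := by
  set H := (zmultiples θ).topologicalClosure
  set K := (zmultiples (m • θ)).topologicalClosure
  have hθH : ∀ a : ℕ, a • θ ∈ H := fun a ↦ le_topologicalClosure _ (nsmul_mem (mem_zmultiples θ) a)
  have hsurj : Function.Surjective
      fun a : Fin m ↦ ((⟨(a : ℕ) • θ, hθH a⟩ : H) : H ⧸ K.addSubgroupOf H) := by
    intro q
    obtain ⟨⟨x, hx⟩, rfl⟩ := QuotientAddGroup.mk_surjective q
    obtain ⟨a, ha, hxa⟩ := exists_lt_sub_nsmul_mem_topologicalClosure_zmultiples_nsmul θ hm hx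
    refine ⟨⟨a, ha⟩, QuotientAddGroup.eq.mpr ?_⟩
    simpa [AddSubgroup.mem_addSubgroupOf, neg_add_eq_sub] using hxa
  have : Finite (H ⧸ K.addSubgroupOf H) := Finite.of_surjective _ hsurj
  exact AddSubgroup.finiteIndex_of_finite_quotient

theorem topologicalClosure_zmultiples_nsmul_eq (θ : G)
    (hconn : IsConnected ((zmultiples θ).topologicalClosure : Set G)) {m : ℕ} (hm : m ≠ 0) :
    (zmultiples (m • θ)).topologicalClosure = (zmultiples θ).topologicalClosure := by
  have := finiteIndex_topologicalClosure_zmultiples_nsmul θ hm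
  refine le_antisymm (AddSubgroup.topologicalClosure_mono ?_)
    (AddSubgroup.le_of_isConnected_of_isClosed_of_finiteIndex hconn
      (AddSubgroup.isClosed_topologicalClosure _))
  exact AddSubgroup.zmultiples_le_of_mem (nsmul_mem (mem_zmultiples θ) m)

theorem mapClusterPt_atTop_add_mul_nsmul (θ : G)
    (hconn : IsConnected ((zmultiples θ).topologicalClosure : Set G)) {x : G}
    (hx : x ∈ (zmultiples θ).topologicalClosure) (a : ℕ) {m : ℕ} (hm : m ≠ 0) :
    MapClusterPt x atTop fun j : ℕ ↦ (a + m * j) • θ := by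
  have hxa : x - a • θ ∈ (zmultiples (m • θ)).topologicalClosure := by
    rw [topologicalClosure_zmultiples_nsmul_eq θ hconn hm]
    exact sub_mem hx (le_topologicalClosure _ (nsmul_mem (mem_zmultiples θ) a))
  rw [← mapClusterPt_atTop_nsmul_iff_mem_topologicalClosure_zmultiples] at hxa
  simpa [Function.comp_def, add_nsmul, smul_smul, mul_comm] using
    hxa.continuousAt_comp (continuous_const_add (a • θ)).continuousAt

end CompactGroup

/-- If `Γ(θ)` is connected, then for every `x ∈ Γ(θ)`, every neighborhood `U` of `x`,
every `m ≥ 1` and every residue `a`, there are infinitely many `k ∈ ℕ` with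
`k ≡ a (mod m)` and `kθ ∈ U`: the multiples of `θ` along any arithmetic progression
are dense in `Γ(θ)`. -/
theorem multiples_along_arith_progression_dense (n : ℕ) (θ : Torus n)
    (hconn : IsConnected (GammaCl n θ)) :
    ∀ x ∈ GammaCl n θ, ∀ U ∈ nhds x, ∀ m : ℕ, 1 ≤ m → ∀ a : ℕ,
      {k : ℕ | k ≡ a [MOD m] ∧ k • θ ∈ U}.Infinite := by
  intro x hx U hU m hm a
  rw [GammaCl, closure_setOf_pos_nsmul_eq] at hconn hx
  have hfreq := (mapClusterPt_atTop_add_mul_nsmul θ hconn hx a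
    (Nat.one_le_iff_ne_zero.mp hm)).frequently hU
  rw [← Nat.frequently_atTop_iff_infinite]
  refine (tendsto_atTop_mono (fun j ↦ Nat.le_add_left (m * j) a)
    (tendsto_id.const_mul_atTop' hm)).frequently ?_
  exact hfreq.mono fun j hj ↦ ⟨by simp [Nat.ModEq], hj⟩
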